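/- arXiv:2405.09008 — 6 statements merged into one kernel-verified Lean document; each statement's English description precedes it below -/
import Mathlib

section
/- Let B be a complex Banach space with continuous linear projections π_s, π_c, π_u satisfying π_s + π_c + π_u = id and π_i ∘ π_j = 0 for i ≠ j, each of operator norm at most 1, with closed ranges E^s, E^c, E^u. Let A : B → B be a continuous linear map commuting with the projections, and let constants δ > 0, ε > 0, μ_s > 0, μ_u > 0 satisfy: ‖A h‖ ≤ μ_s‖h‖ for all h ∈ E^s, ‖A h‖ ≥ μ_u‖h‖ for all h ∈ E^u, μ_s + 3ε < 1, and μ_u − 3ε > 1. Let D̄ = {f : ‖π_s f‖ ≤ δ ∧ ‖π_c f‖ ≤ δ ∧ ‖π_u f‖ ≤ δ}, and let R : D̄ → B satisfy ‖R(f) − A(f)‖ ≤ ε‖f‖ for all f ∈ D̄. Then: (i) for every f ∈ D̄, ‖π_s(R f)‖ < δ (so R(f) never lies on the stable boundary face of the polydisk); (ii) for every f ∈ D̄ with ‖π_u f‖ = δ, ‖π_u(R f)‖ > δ (so R maps the unstable boundary face outside D̄). -/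
/-- Boundary behavior of a `C⁰`-small perturbation `R` of a partially hyperbolic linear
map `A` on the closed polydisk of polyradius `δ`: the image of the polydisk avoids the
stable boundary face, and the unstable boundary face is mapped out of the polydisk. -/
theorem perturbation_boundary_behavior
    {B : Type*} [NormedAddCommGroup B] [NormedSpace ℂ B] [CompleteSpace B]
    (πs πc πu : B →L[ℂ] B)
    (hsum : πs + πc + πu = ContinuousLinearMap.id ℂ B)
    (hsc : πs.comp πc = 0) (hcs : πc.comp πs = 0)
    (hsu : πs.comp πu = 0) (hus : πu.comp πs = 0)
    (hcu : πc.comp πu = 0) (huc : πu.comp πc = 0)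
    (hπs : ‖πs‖ ≤ 1) (hπc : ‖πc‖ ≤ 1) (hπu : ‖πu‖ ≤ 1)
    (hEs : IsClosed ((LinearMap.range (πs : B →ₗ[ℂ] B) : Submodule ℂ B) : Set B))
    (hEc : IsClosed ((LinearMap.range (πc : B →ₗ[ℂ] B) : Submodule ℂ B) : Set B))
    (hEu : IsClosed ((LinearMap.range (πu : B →ₗ[ℂ] B) : Submodule ℂ B) : Set B))
    (A : B →L[ℂ] B)
    (hAs : πs.comp A = A.comp πs) (hAc : πc.comp A = A.comp πc)
    (hAu : πu.comp A = A.comp πu)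
    (δ ε μs μu : ℝ) (hδ : 0 < δ) (hε : 0 < ε) (hμs : 0 < μs) (hμu : 0 < μu)
    (hAstable : ∀ h ∈ LinearMap.range (πs : B →ₗ[ℂ] B), ‖A h‖ ≤ μs * ‖h‖)
    (hAunstable : ∀ h ∈ LinearMap.range (πu : B →ₗ[ℂ] B), μu * ‖h‖ ≤ ‖A h‖)
    (hμs3ε : μs + 3 * ε < 1) (hμu3ε : 1 < μu - 3 * ε)
    (R : B → B)
    (hRA : ∀ f : B, (‖πs f‖ ≤ δ ∧ ‖πc f‖ ≤ δ ∧ ‖πu f‖ ≤ δ) → ‖R f - A f‖ ≤ ε * ‖f‖) :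
    (∀ f : B, (‖πs f‖ ≤ δ ∧ ‖πc f‖ ≤ δ ∧ ‖πu f‖ ≤ δ) → ‖πs (R f)‖ < δ) ∧
    (∀ f : B, (‖πs f‖ ≤ δ ∧ ‖πc f‖ ≤ δ ∧ ‖πu f‖ ≤ δ) → ‖πu f‖ = δ → δ < ‖πu (R f)‖) := by

  have key : ∀ f : B, (‖πs f‖ ≤ δ ∧ ‖πc f‖ ≤ δ ∧ ‖πu f‖ ≤ δ) → ‖f‖ ≤ 3 * δ := by
    intro f ⟨h1, h2, h3⟩
    have hf : f = πs f + πc f + πu f := by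
      have := congrArg (fun T : B →L[ℂ] B => T f) hsum
      simpa using this.symm
    calc ‖f‖ = ‖πs f + πc f + πu f‖ := by rw [← hf]
      _ ≤ ‖πs f + πc f‖ + ‖πu f‖ := norm_add_le _ _
      _ ≤ ‖πs f‖ + ‖πc f‖ + ‖πu f‖ := by linarith [norm_add_le (πs f) (πc f)]
      _ ≤ 3 * δ := by linarith
  constructor
  · intro f hf
    obtain ⟨h1, h2, h3⟩ := hf
    have hE : ‖R f - A f‖ ≤ ε * (3 * δ) := by
      calc ‖R f - A f‖ ≤ ε * ‖f‖ := hRA f ⟨h1, h2, h3⟩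
        _ ≤ ε * (3 * δ) := by nlinarith [key f ⟨h1, h2, h3⟩]
    have hsplit : πs (R f) = A (πs f) + πs (R f - A f) := by
      have : πs (A f) = A (πs f) := by
        have := congrArg (fun T : B →L[ℂ] B => T f) hAs
        simpa using this
      rw [map_sub, ← this]; abel
    have hAsf : ‖A (πs f)‖ ≤ μs * δ := by
      calc ‖A (πs f)‖ ≤ μs * ‖πs f‖ := hAstable _ ⟨f, rfl⟩
        _ ≤ μs * δ := by nlinarith
    have hpE : ‖πs (R f - A f)‖ ≤ ε * (3 * δ) := by
      calc ‖πs (R f - A f)‖ ≤ ‖πs‖ * ‖R f - A f‖ := πs.le_opNorm _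
        _ ≤ 1 * (ε * (3 * δ)) := by
            apply mul_le_mul hπs hE (norm_nonneg _) zero_le_one
        _ = ε * (3 * δ) := one_mul _
    calc ‖πs (R f)‖ = ‖A (πs f) + πs (R f - A f)‖ := by rw [hsplit]
      _ ≤ ‖A (πs f)‖ + ‖πs (R f - A f)‖ := norm_add_le _ _
      _ ≤ μs * δ + ε * (3 * δ) := by linarith
      _ < δ := by nlinarith
  · intro f hf hu
    obtain ⟨h1, h2, h3⟩ := hf
    have hE : ‖R f - A f‖ ≤ ε * (3 * δ) := by
      calc ‖R f - A f‖ ≤ ε * ‖f‖ := hRA f ⟨h1, h2, h3⟩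
        _ ≤ ε * (3 * δ) := by nlinarith [key f ⟨h1, h2, h3⟩]
    have hsplit : πu (R f) = A (πu f) + πu (R f - A f) := by
      have : πu (A f) = A (πu f) := by
        have := congrArg (fun T : B →L[ℂ] B => T f) hAu
        simpa using this
      rw [map_sub, ← this]; abel
    have hAuf : μu * δ ≤ ‖A (πu f)‖ := by
      have := hAunstable (πu f) ⟨f, rfl⟩
      rwa [hu] at this
    have hpE : ‖πu (R f - A f)‖ ≤ ε * (3 * δ) := by
      calc ‖πu (R f - A f)‖ ≤ ‖πu‖ * ‖R f - A f‖ := πu.le_opNorm _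
        _ ≤ 1 * (ε * (3 * δ)) := by
            apply mul_le_mul hπu hE (norm_nonneg _) zero_le_one
        _ = ε * (3 * δ) := one_mul _
    have : μu * δ - ε * (3 * δ) ≤ ‖πu (R f)‖ := by
      have heq : πu (R f) - πu (R f - A f) = A (πu f) := by
        rw [hsplit]; abel
      have h : ‖A (πu f)‖ ≤ ‖πu (R f)‖ + ‖πu (R f - A f)‖ := by
        rw [← heq]; exact norm_sub_le _ _
      linarith
    nlinarith
end

section
/- Let B be a complex Banach space with continuous linear projections π_s and π_{cu} satisfying π_s + π_{cu} = id and π_s ∘ π_{cu} = π_{cu} ∘ π_s = 0, each of operator norm at most 1. Let A : B → B be a continuous linear map commuting with π_s and π_{cu}, and let constants μ_s ≥ 0, μ_{cu} > 0, α > 1, ε ≥ 0 satisfy: ‖A h‖ ≤ μ_s‖h‖ for all h in the range of π_s, ‖A h‖ ≥ μ_{cu}‖h‖ for all h in the range of π_{cu}, and μ_s + ε·(α + 2 + 1/α) ≤ μ_{cu}. Then every continuous linear map L : B → B with ‖L h − A h‖ ≤ ε‖h‖ for all h ∈ B maps the center-unstable cone C^{cu} = {h : α‖π_s h‖ ≤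 ‖π_{cu} h‖} into itself; moreover ‖π_{cu}(L h)‖ ≥ (μ_{cu} − ε(1 + 1/α))·‖π_{cu} h‖ for every h ∈ C^{cu}. -/
/-- Invariant cone field estimate: any `ε`-perturbation `L` of a partially hyperbolic
linear map `A` (stable / center-unstable splitting) maps the center-unstable cone
`C^{cu} = {h : α‖π_s h‖ ≤ ‖π_{cu} h‖}` into itself, and expands the center-unstable
component by the factor `μ_{cu} − ε(1 + 1/α)`. -/
theorem invariant_cone_field
    {B : Type*} [NormedAddCommGroup B] [NormedSpace ℂ B] [CompleteSpace B]
    (πs πcu : B →L[ℂ] B)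
    (hsum : πs + πcu = ContinuousLinearMap.id ℂ B)
    (hscu : πs.comp πcu = 0) (hcus : πcu.comp πs = 0)
    (hπs : ‖πs‖ ≤ 1) (hπcu : ‖πcu‖ ≤ 1)
    (A : B →L[ℂ] B)
    (hAs : πs.comp A = A.comp πs) (hAcu : πcu.comp A = A.comp πcu)
    (μs μcu α ε : ℝ) (hμs : 0 ≤ μs) (hμcu : 0 < μcu) (hα : 1 < α) (hε : 0 ≤ ε)
    (hAstable : ∀ h ∈ LinearMap.range (πs : B →ₗ[ℂ] B), ‖A h‖ ≤ μs * ‖h‖)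
    (hAcunstable : ∀ h ∈ LinearMap.range (πcu : B →ₗ[ℂ] B), μcu * ‖h‖ ≤ ‖A h‖)
    (hconst : μs + ε * (α + 2 + 1 / α) ≤ μcu) :
    ∀ L : B →L[ℂ] B, (∀ h : B, ‖L h - A h‖ ≤ ε * ‖h‖) →
      ∀ h : B, α * ‖πs h‖ ≤ ‖πcu h‖ →
        α * ‖πs (L h)‖ ≤ ‖πcu (L h)‖ ∧
        (μcu - ε * (1 + 1 / α)) * ‖πcu h‖ ≤ ‖πcu (L h)‖ := by
  intro L hL h hcone
  have hα0 : (0:ℝ) < α := lt_trans one_pos hα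
  have hinv : α * (1 / α) = 1 := by field_simp
  have hcu0 : (0:ℝ) ≤ ‖πcu h‖ := norm_nonneg _
  -- ‖πs h‖ ≤ (1/α) ‖πcu h‖
  have hsdec : ‖πs h‖ ≤ (1 / α) * ‖πcu h‖ := by
    rw [one_div, inv_mul_eq_div, le_div_iff₀ hα0, mul_comm]
    exact hcone
  -- ‖h‖ ≤ (1 + 1/α) ‖πcu h‖
  have hdecomp : h = πs h + πcu h := by
    have := congrArg (fun T : B →L[ℂ] B => T h) hsum
    simpa using this.symm
  have hh : ‖h‖ ≤ (1 + 1 / α) * ‖πcu h‖ := by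
    calc ‖h‖ = ‖πs h + πcu h‖ := by rw [← hdecomp]
      _ ≤ ‖πs h‖ + ‖πcu h‖ := norm_add_le _ _
      _ ≤ (1 / α) * ‖πcu h‖ + ‖πcu h‖ := by linarith
      _ = (1 + 1 / α) * ‖πcu h‖ := by ring
  have hAsh : πs (A h) = A (πs h) := congrArg (fun T : B →L[ℂ] B => T h) hAs
  have hAcuh : πcu (A h) = A (πcu h) := congrArg (fun T : B →L[ℂ] B => T h) hAcu
  have hper : ‖L h - A h‖ ≤ ε * ((1 + 1 / α) * ‖πcu h‖) := by
    calc ‖L h - A h‖ ≤ ε * ‖h‖ := hL h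
      _ ≤ ε * ((1 + 1 / α) * ‖πcu h‖) := by
        exact mul_le_mul_of_nonneg_left hh hε
  -- norm-1 bounds on projections
  have hπsle : ∀ x : B, ‖πs x‖ ≤ ‖x‖ := fun x => by
    calc ‖πs x‖ ≤ ‖πs‖ * ‖x‖ := πs.le_opNorm x
      _ ≤ 1 * ‖x‖ := mul_le_mul_of_nonneg_right hπs (norm_nonneg x)
      _ = ‖x‖ := one_mul _
  have hπcule : ∀ x : B, ‖πcu x‖ ≤ ‖x‖ := fun x => by
    calc ‖πcu x‖ ≤ ‖πcu‖ * ‖x‖ := πcu.le_opNorm x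
      _ ≤ 1 * ‖x‖ := mul_le_mul_of_nonneg_right hπcu (norm_nonneg x)
      _ = ‖x‖ := one_mul _
  -- upper bound on ‖πs (L h)‖
  have hAsbound : ‖A (πs h)‖ ≤ μs * ‖πs h‖ := hAstable _ ⟨h, rfl⟩
  have hπsL : ‖πs (L h)‖ ≤ (μs * (1 / α) + ε * (1 + 1 / α)) * ‖πcu h‖ := by
    have h1 : πs (L h) = A (πs h) + πs (L h - A h) := by
      rw [map_sub, hAsh]; abel
    calc ‖πs (L h)‖ = ‖A (πs h) + πs (L h - A h)‖ := by rw [h1]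
      _ ≤ ‖A (πs h)‖ + ‖πs (L h - A h)‖ := norm_add_le _ _
      _ ≤ μs * ‖πs h‖ + ‖L h - A h‖ := add_le_add hAsbound (hπsle _)
      _ ≤ μs * ((1 / α) * ‖πcu h‖) + ε * ((1 + 1 / α) * ‖πcu h‖) :=
          add_le_add (mul_le_mul_of_nonneg_left hsdec hμs) hper
      _ = (μs * (1 / α) + ε * (1 + 1 / α)) * ‖πcu h‖ := by ring
  -- lower bound on ‖πcu (L h)‖
  have hAcubound : μcu * ‖πcu h‖ ≤ ‖A (πcu h)‖ := hAcunstable _ ⟨h, rfl⟩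
  have hπcuL : (μcu - ε * (1 + 1 / α)) * ‖πcu h‖ ≤ ‖πcu (L h)‖ := by
    have h1 : A (πcu h) = πcu (L h) - πcu (L h - A h) := by
      rw [map_sub, hAcuh]; abel
    have h2 : ‖A (πcu h)‖ ≤ ‖πcu (L h)‖ + ‖πcu (L h - A h)‖ := by
      rw [h1]; exact norm_sub_le _ _
    have h3 : ‖πcu (L h - A h)‖ ≤ ε * ((1 + 1 / α) * ‖πcu h‖) :=
      le_trans (hπcule _) hper
    nlinarith [hAcubound]
  refine ⟨?_, hπcuL⟩
  -- cone invariance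
  have key : α * ((μs * (1 / α) + ε * (1 + 1 / α)) * ‖πcu h‖)
      ≤ (μcu - ε * (1 + 1 / α)) * ‖πcu h‖ := by
    have hcoef : α * (μs * (1 / α) + ε * (1 + 1 / α)) ≤ μcu - ε * (1 + 1 / α) := by
      have expand : α * (μs * (1 / α) + ε * (1 + 1 / α))
          = μs * (α * (1 / α)) + ε * (α + α * (1 / α)) := by ring
      rw [expand, hinv]
      nlinarith [hconst]
    calc α * ((μs * (1 / α) + ε * (1 + 1 / α)) * ‖πcu h‖)
        = α * (μs * (1 / α) + ε * (1 + 1 / α)) * ‖πcu h‖ := by ring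
      _ ≤ (μcu - ε * (1 + 1 / α)) * ‖πcu h‖ := mul_le_mul_of_nonneg_right hcoef hcu0
  calc α * ‖πs (L h)‖ ≤ α * ((μs * (1 / α) + ε * (1 + 1 / α)) * ‖πcu h‖) :=
        mul_le_mul_of_nonneg_left hπsL hα0.le
    _ ≤ (μcu - ε * (1 + 1 / α)) * ‖πcu h‖ := key
    _ ≤ ‖πcu (L h)‖ := hπcuL
end

section
/- Define r_prm : ℝ → ℝ by r_prm(θ) = θ/(1−θ) if θ < 1/2 and r_prm(θ) = 2 − 1/θ otherwise, and let G be the Gauss map G(x) = 1/x − ⌊1/x⌋. For every irrational θ ∈ (0,1) with periodic continued fraction expansion — that is, with G^p(θ) = θ for some integer p ≥ 1 — there exists an integer m ≥ 1 such that the m-th iterate of r_prm fixes θ: r_prm^m(θ) = θ. -/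
/-- The Gauss map `G(x) = 1/x − ⌊1/x⌋`. -/
noncomputable def gaussMap (x : ℝ) : ℝ := 1 / x - ⌊(1 / x : ℝ)⌋

/-- The action of prime renormalization on rotation numbers. -/
noncomputable def rprm (θ : ℝ) : ℝ := if θ < 1 / 2 then θ / (1 - θ) else 2 - 1 / θ

private lemma stepB : ∀ n : ℕ, 1 ≤ n → ∀ g : ℝ, 0 < g → g < 1 →
    rprm^[n] (1 / (n + g)) = 1 - g := by
  intro n
  induction n with
  | zero => omega
  | succ k ih =>
    intro _ g hg0 hg1
    rcases Nat.eq_zero_or_pos k with hk | hk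
    · subst hk
      simp only [Function.iterate_one, rprm, Nat.cast_one, Nat.cast_zero, zero_add]
      have hpos : (0:ℝ) < 1 + g := by linarith
      rw [if_neg (by rw [not_lt, le_div_iff₀ hpos]; linarith)]
      rw [one_div_one_div]; ring
    · have hk1 : (1:ℝ) ≤ (k:ℝ) := by exact_mod_cast hk
      have hpos : (0:ℝ) < (k:ℝ) + 1 + g := by linarith
      rw [Function.iterate_succ_apply]
      have h1 : rprm (1 / ((k:ℕ).succ + g)) = 1 / ((k:ℝ) + g) := by
        simp only [rprm, Nat.cast_succ]
        rw [if_pos (by rw [div_lt_div_iff₀ hpos two_pos]; linarith)]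
        have h2 : (1:ℝ) - 1 / ((k:ℝ) + 1 + g) ≠ 0 := by
          have : 1 / ((k:ℝ) + 1 + g) < 1 := by
            rw [div_lt_one hpos]; linarith
          linarith
        have h3 : (k:ℝ) + g ≠ 0 := by positivity
        rw [div_eq_div_iff h2 h3]
        field_simp
        ring
      rw [h1, ih hk g hg0 hg1]

private lemma stepC : ∀ b : ℕ, 1 ≤ b → ∀ h : ℝ, 0 < h → h < 1 →
    rprm^[b] (1 - 1 / (b + h)) = h := by
  intro b
  induction b with
  | zero => omega
  | succ k ih =>
    intro _ h hh0 hh1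
    rcases Nat.eq_zero_or_pos k with hk | hk
    · subst hk
      simp only [Function.iterate_one, rprm, Nat.cast_one, Nat.cast_zero, zero_add]
      have hpos : (0:ℝ) < 1 + h := by linarith
      have hx : (1:ℝ) - 1 / (1 + h) = h / (1 + h) := by field_simp; ring
      rw [hx, if_pos (by rw [div_lt_div_iff₀ hpos two_pos]; linarith)]
      have : (1:ℝ) - h / (1 + h) = 1 / (1 + h) := by field_simp; ring
      rw [this]
      field_simp
    · have hk1 : (1:ℝ) ≤ (k:ℝ) := by exact_mod_cast hk
      have hpos : (0:ℝ) < (k:ℝ) + 1 + h := by linarith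
      have hpos' : (0:ℝ) < (k:ℝ) + h := by linarith
      rw [Function.iterate_succ_apply]
      have h1 : rprm (1 - 1 / ((k:ℕ).succ + h)) = 1 - 1 / ((k:ℝ) + h) := by
        simp only [rprm, Nat.cast_succ]
        have hlt : (1:ℝ)/((k:ℝ)+1+h) ≤ 1/2 := by
          rw [div_le_div_iff₀ hpos two_pos]; linarith
        rw [if_neg (by push_neg; linarith)]
        have hne : (1:ℝ) - 1 / ((k:ℝ) + 1 + h) ≠ 0 := by
          have : 1 / ((k:ℝ) + 1 + h) < 1 := by rw [div_lt_one hpos]; linarith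
          linarith
        have h3 : (k:ℝ) + h ≠ 0 := by positivity
        have hA : (1:ℝ) - 1/((k:ℝ)+1+h) = ((k:ℝ)+h)/((k:ℝ)+1+h) := by
          rw [eq_div_iff hpos.ne', sub_mul, one_mul, div_mul_cancel₀ _ hpos.ne']; ring
        rw [hA, one_div_div]
        field_simp
        ring
      rw [h1, ih hk h hh0 hh1]

private lemma gauss_props {x : ℝ} (hirr : Irrational x) (h0 : 0 < x) (h1 : x < 1) :
    Irrational (gaussMap x) ∧ 0 < gaussMap x ∧ gaussMap x < 1 ∧
      x = 1 / ((⌊(1/x : ℝ)⌋.toNat : ℝ) + gaussMap x) ∧ 1 ≤ ⌊(1/x : ℝ)⌋.toNat := by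
  have hinv : Irrational (1 / x) := by
    rw [one_div]; exact hirr.inv
  have hgi : Irrational (gaussMap x) := by
    unfold gaussMap; exact hinv.sub_intCast _
  have hfr : gaussMap x = Int.fract (1 / x) := rfl
  have hg0 : 0 < gaussMap x := by
    rw [hfr]
    rcases lt_or_eq_of_le (Int.fract_nonneg (1/x : ℝ)) with h | h
    · exact h
    · exfalso
      have := hgi
      rw [hfr, ← h] at this
      exact this ⟨0, by norm_num⟩
  have hg1 : gaussMap x < 1 := by rw [hfr]; exact Int.fract_lt_one _
  have hx1 : (1:ℝ) < 1 / x := by rwa [lt_div_iff₀ h0, one_mul]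
  have hfl : (1:ℤ) ≤ ⌊(1/x : ℝ)⌋ := by
    exact_mod_cast Int.le_floor.mpr (by exact_mod_cast hx1.le)
  have htn : ((⌊(1/x : ℝ)⌋.toNat : ℝ)) = (⌊(1/x : ℝ)⌋ : ℝ) := by
    exact_mod_cast Int.toNat_of_nonneg (by linarith)
  refine ⟨hgi, hg0, hg1, ?_, ?_⟩
  · rw [htn]
    have : (⌊(1/x : ℝ)⌋ : ℝ) + gaussMap x = 1 / x := by unfold gaussMap; ring
    rw [this, one_div_one_div]
  · omega

private lemma two_step {x : ℝ} (hirr : Irrational x) (h0 : 0 < x) (h1 : x < 1) :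
    ∃ k : ℕ, 1 ≤ k ∧ rprm^[k] x = gaussMap^[2] x := by
  obtain ⟨hgi, hg0, hg1, hxeq, hn1⟩ := gauss_props hirr h0 h1
  set n : ℕ := ⌊(1/x : ℝ)⌋.toNat with hn
  set g : ℝ := gaussMap x with hg
  obtain ⟨hhi, hh0, hh1, hgeq, hb1⟩ := gauss_props hgi hg0 hg1
  set b : ℕ := ⌊(1/g : ℝ)⌋.toNat with hb
  set h : ℝ := gaussMap g with hh
  refine ⟨b + n, by omega, ?_⟩
  rw [Function.iterate_add_apply]
  have e1 : rprm^[n] x = 1 - g := by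
    rw [hxeq]; exact stepB n hn1 g hg0 hg1
  rw [e1]
  have e2 : rprm^[b] (1 - g) = h := by
    rw [show (1:ℝ) - g = 1 - 1 / ((b:ℝ) + h) by rw [← hgeq]]
    exact stepC b hb1 h hh0 hh1
  rw [e2]
  show h = gaussMap^[2] x
  simp [hh, hg, Function.iterate_succ_apply']

/-- Every irrational `θ ∈ (0,1)` of periodic type (periodic under the Gauss map) is fixed
by some iterate of the prime renormalization map `r_prm`. -/
theorem periodic_type_fixed_by_prime_renormalization
    (θ : ℝ) (hirr : Irrational θ) (h0 : 0 < θ) (h1 : θ < 1)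
    (hper : ∃ p : ℕ, 1 ≤ p ∧ gaussMap^[p] θ = θ) :
    ∃ m : ℕ, 1 ≤ m ∧ rprm^[m] θ = θ := by
  obtain ⟨p, hp1, hp⟩ := hper
  have hprops : ∀ j : ℕ, Irrational (gaussMap^[j] θ) ∧ 0 < gaussMap^[j] θ ∧ gaussMap^[j] θ < 1 := by
    intro j
    induction j with
    | zero => exact ⟨hirr, h0, h1⟩
    | succ k ih =>
      obtain ⟨hi, ha, hb⟩ := ih
      obtain ⟨h1', h2', h3', _, _⟩ := gauss_props hi ha hb
      rw [Function.iterate_succ_apply']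
      exact ⟨h1', h2', h3'⟩
  have key : ∀ j : ℕ, ∃ m : ℕ, j ≤ m ∧ rprm^[m] θ = gaussMap^[2 * j] θ := by
    intro j
    induction j with
    | zero => exact ⟨0, le_refl _, rfl⟩
    | succ k ih =>
      obtain ⟨m, hm, hmeq⟩ := ih
      obtain ⟨hi, ha, hb⟩ := hprops (2 * k)
      obtain ⟨l, hl1, hleq⟩ := two_step hi ha hb
      refine ⟨l + m, by omega, ?_⟩
      rw [Function.iterate_add_apply, hmeq, hleq]
      rw [show 2 * (k + 1) = 2 + 2 * k by ring, Function.iterate_add_apply]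
  obtain ⟨m, hm, hmeq⟩ := key p
  refine ⟨m, by omega, ?_⟩
  rw [hmeq, two_mul, Function.iterate_add_apply, hp, hp]
end

section
/- Let M be a 2×2 matrix with integer entries, let t > 1 be a real number, and let u, v be positive real numbers such that u/v is irrational and the column vector (−u, v) is an eigenvector of M with eigenvalue t⁻¹, i.e. M·(−u, v)ᵀ = t⁻¹·(−u, v)ᵀ. Then for every natural number m and all natural numbers a, b, a', b', one has t^{−m}·(b·v − a·u) = b'·v − a'·u if and only if the integer row vector (a, b)·M^m equals (a', b'). -/
/-!
Pair an integer row vector `p` with the eigenvector `(−u, v)`: this gives the translation length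
`p₁ v − p₀ u`. Since `p ᵥ* M ⬝ᵥ x = p ⬝ᵥ (M *ᵥ x)`, right multiplication by `M^m` scales the
translation length by `t^{-m}`, and irrationality of `u / v` makes the translation length an
injective function of `p`.
-/

open Matrix

theorem Matrix.pow_mulVec_eq_smul_of_mulVec_eq_smul {n R : Type*} [Fintype n] [DecidableEq n]
    [CommSemiring R] {A : Matrix n n R} {x : n → R} {c : R} (h : A *ᵥ x = c • x) (k : ℕ) :
    (A ^ k) *ᵥ x = c ^ k • x := by
  induction k with
  | zero => simp
  | succ k ih => rw [pow_succ', ← mulVec_mulVec, ih, mulVec_smul, h, smul_smul, pow_succ]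

theorem Irrational.intCast_eq_zero_of_mul_eq_mul {u v : ℝ} (hirr : Irrational (u / v))
    {c d : ℤ} (h : (d : ℝ) * v = c * u) : c = 0 ∧ d = 0 := by
  have hv : v ≠ 0 := fun hv => hirr.ne_zero (by simp [hv])
  have hc : c = 0 := by
    by_contra hc
    refine hirr ⟨(d / c : ℚ), ?_⟩
    rw [eq_div_iff hv]
    push_cast
    field_simp
    linarith
  refine ⟨hc, ?_⟩
  simpa [hc, hv] using h

def translationLength (u v : ℝ) (p : Fin 2 → ℤ) : ℝ :=
  (p 1 : ℝ) * v - (p 0 : ℝ) * u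

theorem translationLength_eq_dotProduct (u v : ℝ) (p : Fin 2 → ℤ) :
    translationLength u v p = (Int.cast ∘ p : Fin 2 → ℝ) ⬝ᵥ ![-u, v] := by
  simp only [translationLength, dotProduct, Function.comp_apply, Fin.sum_univ_two, cons_val_zero,
    cons_val_one, cons_val_fin_one]
  ring

theorem translationLength_injective {u v : ℝ} (hirr : Irrational (u / v)) :
    Function.Injective (translationLength u v) := by
  intro p q hpq
  obtain ⟨h0, h1⟩ := hirr.intCast_eq_zero_of_mul_eq_mul (c := p 0 - q 0) (d := p 1 - q 1) (by
    unfold translationLength at hpq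
    push_cast
    linarith)
  ext i
  fin_cases i <;> simp <;> omega

theorem translationLength_vecMul {u v c : ℝ} {N : Matrix (Fin 2) (Fin 2) ℤ}
    (hN : (N.map (Int.cast : ℤ → ℝ)) *ᵥ ![-u, v] = c • ![-u, v]) (p : Fin 2 → ℤ) :
    translationLength u v (p ᵥ* N) = c * translationLength u v p := by
  have hcast : (Int.cast ∘ (p ᵥ* N) : Fin 2 → ℝ) = (Int.cast ∘ p) ᵥ* N.map Int.cast :=
    funext fun i => (Int.castRingHom ℝ).map_vecMul N p i
  rw [translationLength_eq_dotProduct, translationLength_eq_dotProduct, hcast,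
    ← dotProduct_mulVec, hN, dotProduct_smul, smul_eq_mul]

theorem free_action_of_power_triples_general
    (M : Matrix (Fin 2) (Fin 2) ℤ) (t u v : ℝ)
    (hirr : Irrational (u / v))
    (heig : (M.map (Int.cast : ℤ → ℝ)).mulVec ![-u, v] = t⁻¹ • ![-u, v]) :
    ∀ m a b a' b' : ℕ,
      t ^ (-(m : ℤ)) * ((b : ℝ) * v - (a : ℝ) * u) = (b' : ℝ) * v - (a' : ℝ) * u ↔
        Matrix.vecMul ![(a : ℤ), (b : ℤ)] (M ^ m) = ![(a' : ℤ), (b' : ℤ)] := by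
  intro m a b a' b'
  have hpow : ((M ^ m).map (Int.cast : ℤ → ℝ)) *ᵥ ![-u, v] = t ^ (-(m : ℤ)) • ![-u, v] := by
    rw [show (M ^ m).map (Int.cast : ℤ → ℝ) = M.map Int.cast ^ m from
      M.map_pow (Int.castRingHom ℝ) m, pow_mulVec_eq_smul_of_mulVec_eq_smul heig, _root_.zpow_neg,
      zpow_natCast, inv_pow]
  rw [← (translationLength_injective hirr).eq_iff, translationLength_vecMul hpow]
  simp [translationLength]

/-- Free action of the cascade of translations: with `(−u, v)` an eigenvector of the
integer matrix `M` with eigenvalue `t⁻¹` and `u/v` irrational, the translation lengths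
`t^{−m}(b·v − a·u)` and `b'·v − a'·u` agree if and only if `(a b)·M^m = (a' b')`. -/
theorem free_action_of_power_triples
    (M : Matrix (Fin 2) (Fin 2) ℤ) (t u v : ℝ)
    (ht : 1 < t) (hu : 0 < u) (hv : 0 < v) (hirr : Irrational (u / v))
    (heig : (M.map (Int.cast : ℤ → ℝ)).mulVec ![-u, v] = t⁻¹ • ![-u, v]) :
    ∀ m a b a' b' : ℕ,
      t ^ (-(m : ℤ)) * ((b : ℝ) * v - (a : ℝ) * u) = (b' : ℝ) * v - (a' : ℝ) * u ↔
        Matrix.vecMul ![(a : ℤ), (b : ℤ)] (M ^ m) = ![(a' : ℤ), (b' : ℤ)] :=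
  free_action_of_power_triples_general M t u v hirr heig
end

section
/- Let μ ∈ ℂ with 0 < |μ| < 1, let δ > 0, ε ∈ (0, 1 − |μ|), C > 0 and λ ∈ (0,1). Suppose φ and φ_k (k ∈ ℕ) are functions holomorphic on the open disk 𝔻_δ = {z ∈ ℂ : |z| < δ} satisfying: φ(0) = 0 and φ'(0) = μ; φ_k(0) = 0 and φ_k'(0) ≠ 0 for all k; each φ_k is injective on 𝔻_δ; |φ_k(z)| ≤ (|μ| + ε)·|z| for all z ∈ 𝔻_δ and all k; and sup_{z ∈ 𝔻_δ} |φ_k(z) − φ(z)| ≤ C·λᵏ for all k. Then the functions h_n(z) = μ^{−(n+1)}·(φ_n ∘ φ_{n−1} ∘ ⋯ ∘ φ_0)(z) converge uniformly on 𝔻_δ, as n → ∞, to a holomorphic function h on 𝔻_δ with h(0) = 0 and h'(0) ≠ 0 which is injective on 𝔻_δ. -/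
open Metric Set Filter

/-- Schwarz-type bound on the difference quotient. -/
lemma schwarz_dslope {δ M : ℝ} (hδ : 0 < δ) (g : ℂ → ℂ)
    (hd : DifferentiableOn ℂ g (ball 0 δ)) (h0 : g 0 = 0)
    (hb : ∀ z ∈ ball (0:ℂ) δ, ‖g z‖ ≤ M) :
    ∀ z ∈ ball (0:ℂ) δ, ‖dslope g 0 z‖ ≤ M / δ := by
  intro z hz
  have key : ∀ M' ∈ Ioi M, ‖dslope g 0 z‖ ≤ M' / δ := by
    intro M' hM'
    refine Complex.norm_dslope_le_div_of_mapsTo_ball hd ?_ hz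
    intro w hw
    rw [mem_closedBall, h0, dist_eq_norm, sub_zero]
    exact le_of_lt (lt_of_le_of_lt (hb w hw) hM')
  have htt : Filter.Tendsto (fun M' : ℝ => M' / δ) (nhdsWithin M (Ioi M)) (nhds (M / δ)) :=
    ((continuous_id.div_const δ).tendsto M).mono_left nhdsWithin_le_nhds
  exact ge_of_tendsto htt (eventually_nhdsWithin_of_forall key)

lemma schwarz_norm {δ M : ℝ} (hδ : 0 < δ) (g : ℂ → ℂ)
    (hd : DifferentiableOn ℂ g (ball 0 δ)) (h0 : g 0 = 0)
    (hb : ∀ z ∈ ball (0:ℂ) δ, ‖g z‖ ≤ M) :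
    ∀ z ∈ ball (0:ℂ) δ, ‖g z‖ ≤ (M / δ) * ‖z‖ := by
  intro z hz
  rcases eq_or_ne z 0 with rfl | hz0
  · simp [h0]
  · have := schwarz_dslope hδ g hd h0 hb z hz
    rw [dslope_of_ne _ hz0, slope_def_field, h0, sub_zero, sub_zero, norm_div] at this
    rw [← div_le_iff₀ (norm_pos_iff.mpr hz0)]
    exact this

lemma schwarz_deriv {δ M : ℝ} (hδ : 0 < δ) (g : ℂ → ℂ)
    (hd : DifferentiableOn ℂ g (ball 0 δ)) (h0 : g 0 = 0)
    (hb : ∀ z ∈ ball (0:ℂ) δ, ‖g z‖ ≤ M) :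
    ‖deriv g 0‖ ≤ M / δ := by
  have := schwarz_dslope hδ g hd h0 hb 0 (mem_ball_self hδ)
  rwa [dslope_same] at this

lemma schwarz_quadratic {δ M : ℝ} (hδ : 0 < δ) (g : ℂ → ℂ)
    (hd : DifferentiableOn ℂ g (ball 0 δ)) (h0 : g 0 = 0) (h1 : deriv g 0 = 0)
    (hb : ∀ z ∈ ball (0:ℂ) δ, ‖g z‖ ≤ M) :
    ∀ z ∈ ball (0:ℂ) δ, ‖g z‖ ≤ (M / δ / δ) * ‖z‖ ^ 2 := by
  set g₁ := dslope g 0 with hg₁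
  have hmem : ball (0:ℂ) δ ∈ nhds (0:ℂ) := ball_mem_nhds _ hδ
  have hd₁ : DifferentiableOn ℂ g₁ (ball 0 δ) := (Complex.differentiableOn_dslope hmem).mpr hd
  have h₁0 : g₁ 0 = 0 := by rw [hg₁, dslope_same, h1]
  have hb₁ : ∀ z ∈ ball (0:ℂ) δ, ‖g₁ z‖ ≤ M / δ := schwarz_dslope hδ g hd h0 hb
  have key : ∀ z ∈ ball (0:ℂ) δ, ‖g₁ z‖ ≤ (M / δ / δ) * ‖z‖ :=
    schwarz_norm hδ g₁ hd₁ h₁0 hb₁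
  intro z hz
  rcases eq_or_ne z 0 with rfl | hz0
  · simp [h0]
  · have hgz : g z = z * g₁ z := by
      rw [hg₁, dslope_of_ne _ hz0, slope_def_field, h0, sub_zero, sub_zero]
      field_simp
    rw [hgz, norm_mul, sq]
    calc ‖z‖ * ‖g₁ z‖ ≤ ‖z‖ * ((M / δ / δ) * ‖z‖) :=
          mul_le_mul_of_nonneg_left (key z hz) (norm_nonneg z)
      _ = M / δ / δ * (‖z‖ * ‖z‖) := by ring

lemma exp_neg_two_le_one_sub {x : ℝ} (hx0 : 0 ≤ x) (hx : x ≤ 1/2) :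
    Real.exp (-(2*x)) ≤ 1 - x := by
  have h2 : (0:ℝ) < 1 + 2*x := by linarith
  have h3 : Real.exp (-(2*x)) ≤ (1+2*x)⁻¹ := by
    rw [Real.exp_neg]
    exact inv_anti₀ h2 (by linarith [Real.add_one_le_exp (2*x)])
  refine h3.trans ?_
  rw [inv_eq_one_div, div_le_iff₀ h2]
  nlinarith

set_option maxHeartbeats 2000000 in
/-- Convergence of linearizing coordinates: if the univalent maps `φ_k` fix `0`, contract
the disk `𝔻_δ` by a factor `‖μ‖ + ε < 1`, and converge exponentially fast to a map `φ`
with `φ(0) = 0`, `φ'(0) = μ`, then the rescaled compositions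
`h_n = μ^{−(n+1)} · (φ_n ∘ ⋯ ∘ φ_0)` converge uniformly on `𝔻_δ` to a univalent map
fixing `0` with nonzero derivative at `0`. -/
theorem linearizing_coordinates_exist
    (μ : ℂ) (hμ0 : 0 < ‖μ‖) (hμ1 : ‖μ‖ < 1)
    (δ : ℝ) (hδ : 0 < δ)
    (ε : ℝ) (hε0 : 0 < ε) (hε1 : ε < 1 - ‖μ‖)
    (C : ℝ) (hC : 0 < C)
    (lam : ℝ) (hlam0 : 0 < lam) (hlam1 : lam < 1)
    (φ : ℂ → ℂ) (φs : ℕ → ℂ → ℂ)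
    (hφ : DifferentiableOn ℂ φ (Metric.ball 0 δ))
    (hφs : ∀ k, DifferentiableOn ℂ (φs k) (Metric.ball 0 δ))
    (hφ0 : φ 0 = 0) (hφ'0 : deriv φ 0 = μ)
    (hφs0 : ∀ k, φs k 0 = 0) (hφs'0 : ∀ k, deriv (φs k) 0 ≠ 0)
    (hinj : ∀ k, Set.InjOn (φs k) (Metric.ball 0 δ))
    (hcontr : ∀ k, ∀ z ∈ Metric.ball (0 : ℂ) δ, ‖φs k z‖ ≤ (‖μ‖ + ε) * ‖z‖)
    (hclose : ∀ k, ∀ z ∈ Metric.ball (0 : ℂ) δ, ‖φs k z - φ z‖ ≤ C * lam ^ k)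
    (Ψ : ℕ → ℂ → ℂ)
    (hΨ0 : ∀ z, Ψ 0 z = φs 0 z)
    (hΨsucc : ∀ n z, Ψ (n + 1) z = φs (n + 1) (Ψ n z)) :
    ∃ h : ℂ → ℂ,
      TendstoUniformlyOn (fun (n : ℕ) (z : ℂ) => μ ^ (-((n : ℤ) + 1)) * Ψ n z) h
        Filter.atTop (Metric.ball 0 δ) ∧
      DifferentiableOn ℂ h (Metric.ball 0 δ) ∧
      h 0 = 0 ∧ deriv h 0 ≠ 0 ∧ Set.InjOn h (Metric.ball 0 δ) := by
  classical
  have h0S : (0:ℂ) ∈ ball (0:ℂ) δ := mem_ball_self hδ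
  have hμne : μ ≠ 0 := by simpa using norm_pos_iff.mp hμ0
  have habs : ‖μ‖ ≠ 0 := hμ0.ne'
  have hδne : δ ≠ 0 := hδ.ne'
  set r : ℝ := ‖μ‖ + ε with hrdef
  have hr0 : 0 < r := by positivity
  have hμr : ‖μ‖ < r := by simp [hrdef, hε0]
  have hr1 : r < 1 := by rw [hrdef]; linarith
  set q : ℝ := max lam r with hqdef
  have hq0 : 0 < q := lt_of_lt_of_le hlam0 (le_max_left _ _)
  have hq1 : q < 1 := max_lt hlam1 hr1
  have hlamq : lam ≤ q := le_max_left _ _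
  have hrq : r ≤ q := le_max_right _ _
  -- global bound for φ
  have hφb : ∀ z ∈ ball (0:ℂ) δ, ‖φ z‖ ≤ r * δ + C := by
    intro z hz
    have h1 := hcontr 0 z hz
    have h2 := hclose 0 z hz
    have h3 : ‖z‖ ≤ δ := le_of_lt (by simpa [dist_eq_norm] using hz)
    have : ‖φ z‖ ≤ ‖φs 0 z‖ + ‖φs 0 z - φ z‖ := by
      calc ‖φ z‖ = ‖φs 0 z - (φs 0 z - φ z)‖ := by ring_nf
        _ ≤ ‖φs 0 z‖ + ‖φs 0 z - φ z‖ := norm_sub_le _ _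
    have h4 : r * ‖z‖ ≤ r * δ := mul_le_mul_of_nonneg_left h3 hr0.le
    simp only [pow_zero, mul_one] at h2
    linarith
  -- quadratic bound for φ z - μ z
  set K : ℝ := (r * δ + C + ‖μ‖ * δ) / δ / δ with hKdef
  have hK0 : 0 ≤ K := by positivity
  have hquad : ∀ z ∈ ball (0:ℂ) δ, ‖φ z - μ * z‖ ≤ K * ‖z‖ ^ 2 := by
    have hd : DifferentiableOn ℂ (fun z => φ z - μ * z) (ball 0 δ) :=
      hφ.sub ((differentiable_id.const_mul μ).differentiableOn)
    have h0 : (fun z => φ z - μ * z) 0 = 0 := by simp [hφ0]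
    have h1 : deriv (fun z => φ z - μ * z) 0 = 0 := by
      have hφat : DifferentiableAt ℂ φ 0 := hφ.differentiableAt (isOpen_ball.mem_nhds h0S)
      have hlin : DifferentiableAt ℂ (fun z : ℂ => μ * z) 0 :=
        (differentiable_id.const_mul μ).differentiableAt
      have hμz : deriv (fun z : ℂ => μ * z) 0 = μ := by
        simpa using ((hasDerivAt_id (0:ℂ)).const_mul μ).deriv
      rw [deriv_fun_sub hφat hlin, hφ'0, hμz, sub_self]
    have hb : ∀ z ∈ ball (0:ℂ) δ, ‖φ z - μ * z‖ ≤ r * δ + C + ‖μ‖ * δ := by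
      intro z hz
      have h3 : ‖z‖ ≤ δ := le_of_lt (by simpa [dist_eq_norm] using hz)
      have := hφb z hz
      calc ‖φ z - μ * z‖ ≤ ‖φ z‖ + ‖μ * z‖ := norm_sub_le _ _
        _ ≤ (r * δ + C) + ‖μ‖ * δ := by
            rw [norm_mul]
            gcongr
        _ = r * δ + C + ‖μ‖ * δ := by ring
    exact schwarz_quadratic hδ _ hd h0 h1 hb
  -- linear closeness
  have hlin : ∀ k, ∀ z ∈ ball (0:ℂ) δ, ‖φs k z - φ z‖ ≤ (C * lam ^ k / δ) * ‖z‖ := by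
    intro k
    refine schwarz_norm hδ _ ((hφs k).sub hφ) (by simp [hφs0 k, hφ0]) ?_
    intro z hz
    exact hclose k z hz
  -- derivative closeness
  have hdcl : ∀ k, ‖deriv (φs k) 0 - μ‖ ≤ C * lam ^ k / δ := by
    intro k
    have hd : DifferentiableOn ℂ (fun z => φs k z - φ z) (ball 0 δ) := (hφs k).sub hφ
    have := schwarz_deriv hδ _ hd (by simp [hφs0 k, hφ0]) (fun z hz => hclose k z hz)
    have hφsat : DifferentiableAt ℂ (φs k) 0 := (hφs k).differentiableAt (isOpen_ball.mem_nhds h0S)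
    have hφat : DifferentiableAt ℂ φ 0 := hφ.differentiableAt (isOpen_ball.mem_nhds h0S)
    rwa [deriv_fun_sub hφsat hφat, hφ'0] at this
  -- Ψ basics
  have Ψnorm : ∀ n, ∀ z ∈ ball (0:ℂ) δ, ‖Ψ n z‖ ≤ r ^ (n+1) * ‖z‖ := by
    intro n
    induction n with
    | zero =>
        intro z hz
        rw [hΨ0]
        simpa [pow_one] using hcontr 0 z hz
    | succ n ih =>
        intro z hz
        have hzn : ‖z‖ < δ := by simpa [dist_eq_norm] using hz
        have h1 := ih z hz
        have hr1n : r ^ (n+1) ≤ 1 := pow_le_one₀ hr0.le hr1.le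
        have hw : Ψ n z ∈ ball (0:ℂ) δ := by
          have : ‖Ψ n z‖ < δ :=
            lt_of_le_of_lt (h1.trans (by nlinarith [norm_nonneg z])) hzn
          simpa [dist_eq_norm] using this
        rw [hΨsucc]
        calc ‖φs (n+1) (Ψ n z)‖ ≤ r * ‖Ψ n z‖ := hcontr (n+1) _ hw
          _ ≤ r * (r ^ (n+1) * ‖z‖) := mul_le_mul_of_nonneg_left h1 hr0.le
          _ = r ^ (n+1+1) * ‖z‖ := by ring
  have Ψmem : ∀ n, ∀ z ∈ ball (0:ℂ) δ, Ψ n z ∈ ball (0:ℂ) δ := by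
    intro n z hz
    have h1 := Ψnorm n z hz
    have h3 : ‖z‖ < δ := by simpa [dist_eq_norm] using hz
    have h4 : r ^ (n+1) ≤ 1 := pow_le_one₀ hr0.le hr1.le
    have : ‖Ψ n z‖ < δ := lt_of_le_of_lt (h1.trans (by nlinarith [norm_nonneg z])) h3
    simpa [dist_eq_norm] using this
  have Ψzero : ∀ n, Ψ n 0 = 0 := by
    intro n
    induction n with
    | zero => rw [hΨ0]; exact hφs0 0
    | succ n ih => rw [hΨsucc, ih]; exact hφs0 (n+1)
  have Ψdiff : ∀ n, DifferentiableOn ℂ (Ψ n) (ball (0:ℂ) δ) := by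
    intro n
    induction n with
    | zero => exact (hφs 0).congr (fun z _ => hΨ0 z)
    | succ n ih =>
        refine (DifferentiableOn.comp (hφs (n+1)) ih (fun z hz => Ψmem n z hz)).congr
          (fun z _ => hΨsucc n z)
  have Ψinj : ∀ n, Set.InjOn (Ψ n) (ball (0:ℂ) δ) := by
    intro n
    induction n with
    | zero => intro x hx y hy hxy; exact hinj 0 hx hy (by rw [← hΨ0, ← hΨ0, hxy])
    | succ n ih =>
        intro x hx y hy hxy
        rw [hΨsucc, hΨsucc] at hxy
        exact ih hx hy (hinj (n+1) (Ψmem n x hx) (Ψmem n y hy) hxy)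
  -- constants
  set a : ℝ := C / (δ * ‖μ‖) with hadef
  set b : ℝ := K * δ / ‖μ‖ with hbdef
  have ha0 : 0 < a := by positivity
  have hb0 : 0 ≤ b := by positivity
  -- one-step perturbation estimate
  have hkey : ∀ n, ∀ w ∈ ball (0:ℂ) δ, ‖w‖ ≤ r ^ (n+1) * δ →
      ‖φs (n+1) w - μ * w‖ ≤ (a + b) * q ^ (n+1) * (‖μ‖ * ‖w‖) := by
    intro n w hw hwb
    have h1 := hlin (n+1) w hw
    have h2 := hquad w hw
    have e1 : C * lam ^ (n+1) / δ = a * lam ^ (n+1) * ‖μ‖ := by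
      rw [hadef]; field_simp [habs, hδne]
    have h4 : K * ‖w‖ ^ 2 ≤ b * r ^ (n+1) * ‖μ‖ * ‖w‖ := by
      have h5 : K * ‖w‖ ≤ K * (r ^ (n+1) * δ) := mul_le_mul_of_nonneg_left hwb hK0
      have e2 : K * (r ^ (n+1) * δ) = b * r ^ (n+1) * ‖μ‖ := by
        rw [hbdef]; field_simp [habs, hδne]
      calc K * ‖w‖ ^ 2 = (K * ‖w‖) * ‖w‖ := by ring
        _ ≤ (b * r ^ (n+1) * ‖μ‖) * ‖w‖ :=
            mul_le_mul_of_nonneg_right (h5.trans_eq e2) (norm_nonneg w)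
    have hlq : lam ^ (n+1) ≤ q ^ (n+1) := pow_le_pow_left₀ hlam0.le hlamq _
    have hrq' : r ^ (n+1) ≤ q ^ (n+1) := pow_le_pow_left₀ hr0.le hrq _
    have hsplit : φs (n+1) w - μ * w = (φs (n+1) w - φ w) + (φ w - μ * w) := by ring
    calc ‖φs (n+1) w - μ * w‖ ≤ ‖φs (n+1) w - φ w‖ + ‖φ w - μ * w‖ := by
          rw [hsplit]; exact norm_add_le _ _
      _ ≤ (C * lam ^ (n+1) / δ) * ‖w‖ + K * ‖w‖ ^ 2 := add_le_add h1 h2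
      _ = a * lam ^ (n+1) * ‖μ‖ * ‖w‖ + K * ‖w‖ ^ 2 := by rw [e1]
      _ ≤ a * lam ^ (n+1) * ‖μ‖ * ‖w‖ + b * r ^ (n+1) * ‖μ‖ * ‖w‖ := by linarith
      _ ≤ a * q ^ (n+1) * ‖μ‖ * ‖w‖ + b * q ^ (n+1) * ‖μ‖ * ‖w‖ := by
          have hn1 : (0:ℝ) ≤ ‖μ‖ * ‖w‖ := by positivity
          have g1 : a * lam ^ (n+1) * ‖μ‖ * ‖w‖ ≤ a * q ^ (n+1) * ‖μ‖ * ‖w‖ := by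
            have := mul_le_mul_of_nonneg_left hlq ha0.le
            nlinarith [norm_nonneg w, norm_nonneg μ]
          have g2 : b * r ^ (n+1) * ‖μ‖ * ‖w‖ ≤ b * q ^ (n+1) * ‖μ‖ * ‖w‖ := by
            have := mul_le_mul_of_nonneg_left hrq' hb0
            nlinarith [norm_nonneg w, norm_nonneg μ]
          linarith
      _ = (a + b) * q ^ (n+1) * (‖μ‖ * ‖w‖) := by ring
  set B : ℝ := (r * δ / ‖μ‖) * Real.exp ((a+b) * (1-q)⁻¹) with hBdef
  have hB0 : 0 < B := by positivity
  have hsumq : ∀ n : ℕ, (∑ k ∈ Finset.range n, q ^ (k+1)) ≤ (1-q)⁻¹ := by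
    intro n
    calc ∑ k ∈ Finset.range n, q ^ (k+1) ≤ ∑ k ∈ Finset.range n, q ^ k :=
          Finset.sum_le_sum (fun k _ => pow_le_pow_of_le_one hq0.le hq1.le (Nat.le_succ k))
      _ ≤ ∑' k : ℕ, q ^ k := Summable.sum_le_tsum _ (fun k _ => pow_nonneg hq0.le k)
            (summable_geometric_of_lt_one hq0.le hq1)
      _ = (1-q)⁻¹ := tsum_geometric_of_lt_one hq0.le hq1
  have hB : ∀ n, ∀ z ∈ ball (0:ℂ) δ, ‖Ψ n z‖ ≤ B * ‖μ‖ ^ (n+1) := by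
    have hind : ∀ n, ∀ z ∈ ball (0:ℂ) δ, ‖Ψ n z‖ ≤
        (r * δ / ‖μ‖) * Real.exp ((a+b) * ∑ k ∈ Finset.range n, q ^ (k+1)) * ‖μ‖ ^ (n+1) := by
      intro n
      induction n with
      | zero =>
          intro z hz
          have h1 := hcontr 0 z hz
          have hzn : ‖z‖ ≤ δ := le_of_lt (by simpa [dist_eq_norm] using hz)
          rw [hΨ0 z]
          simp only [Finset.range_zero, Finset.sum_empty, mul_zero, Real.exp_zero, mul_one,
            zero_add, pow_one]
          have e : r * δ / ‖μ‖ * ‖μ‖ = r * δ := by field_simp [habs]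
          rw [e]
          calc ‖φs 0 z‖ ≤ r * ‖z‖ := by simpa [pow_one] using h1
            _ ≤ r * δ := mul_le_mul_of_nonneg_left hzn hr0.le
      | succ n ih =>
          intro z hz
          have hzn : ‖z‖ ≤ δ := le_of_lt (by simpa [dist_eq_norm] using hz)
          have hw : Ψ n z ∈ ball (0:ℂ) δ := Ψmem n z hz
          have hwb : ‖Ψ n z‖ ≤ r ^ (n+1) * δ := by
            refine (Ψnorm n z hz).trans ?_
            exact mul_le_mul_of_nonneg_left hzn (by positivity)
          have hk := hkey n (Ψ n z) hw hwb
          have h2 : ‖Ψ (n+1) z‖ ≤ (1 + (a+b) * q ^ (n+1)) * (‖μ‖ * ‖Ψ n z‖) := by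
            rw [hΨsucc]
            have heq : ‖φs (n+1) (Ψ n z)‖
                = ‖μ * Ψ n z + (φs (n+1) (Ψ n z) - μ * Ψ n z)‖ := by
              congr 1; ring
            calc ‖φs (n+1) (Ψ n z)‖
                ≤ ‖μ * Ψ n z‖ + ‖φs (n+1) (Ψ n z) - μ * Ψ n z‖ :=
                  heq.trans_le (norm_add_le _ _)
              _ ≤ ‖μ‖ * ‖Ψ n z‖ + (a+b) * q ^ (n+1) * (‖μ‖ * ‖Ψ n z‖) := by
                  rw [norm_mul]; linarith
              _ = (1 + (a+b) * q ^ (n+1)) * (‖μ‖ * ‖Ψ n z‖) := by ring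
          have h3 : (1 + (a+b) * q ^ (n+1)) ≤ Real.exp ((a+b) * q ^ (n+1)) := by
            have := Real.add_one_le_exp ((a+b) * q ^ (n+1)); linarith
          have h4 : (0:ℝ) ≤ ‖μ‖ * ‖Ψ n z‖ := by positivity
          have h5 : ‖μ‖ * ‖Ψ n z‖ ≤
              ‖μ‖ * ((r * δ / ‖μ‖) * Real.exp ((a+b) * ∑ k ∈ Finset.range n, q ^ (k+1))
                * ‖μ‖ ^ (n+1)) :=
            mul_le_mul_of_nonneg_left (ih z hz) (norm_nonneg μ)
          calc ‖Ψ (n+1) z‖ ≤ (1 + (a+b) * q ^ (n+1)) * (‖μ‖ * ‖Ψ n z‖) := h2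
            _ ≤ Real.exp ((a+b) * q ^ (n+1)) *
                (‖μ‖ * ((r * δ / ‖μ‖) * Real.exp ((a+b) * ∑ k ∈ Finset.range n, q ^ (k+1))
                  * ‖μ‖ ^ (n+1))) := by
                have he : (0:ℝ) ≤ 1 + (a+b) * q ^ (n+1) := by positivity
                exact mul_le_mul h3 h5 h4 (Real.exp_pos _).le
            _ = (r * δ / ‖μ‖) * Real.exp ((a+b) * ∑ k ∈ Finset.range (n+1), q ^ (k+1))
                * ‖μ‖ ^ (n+1+1) := by
                rw [Finset.sum_range_succ, mul_add, Real.exp_add]; ring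
    intro n z hz
    refine (hind n z hz).trans ?_
    rw [hBdef]
    have hex : Real.exp ((a+b) * ∑ k ∈ Finset.range n, q ^ (k+1))
        ≤ Real.exp ((a+b) * (1-q)⁻¹) :=
      Real.exp_le_exp.mpr (mul_le_mul_of_nonneg_left (hsumq n) (by positivity))
    have := mul_le_mul_of_nonneg_left hex (by positivity : (0:ℝ) ≤ r * δ / ‖μ‖)
    exact mul_le_mul_of_nonneg_right this (by positivity)
  set D : ℝ := B * (a + b) with hDdef
  have hD0 : 0 ≤ D := by positivity
  set F : ℕ → ℂ → ℂ := fun n z => μ ^ (-((n : ℤ) + 1)) * Ψ n z with hFdef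
  have hcau : ∀ z ∈ ball (0:ℂ) δ, ∀ n, dist (F n z) (F (n+1) z) ≤ D * q ^ n := by
    intro z hz n
    have hzn : ‖z‖ ≤ δ := le_of_lt (by simpa [dist_eq_norm] using hz)
    have hw : Ψ n z ∈ ball (0:ℂ) δ := Ψmem n z hz
    have hwb : ‖Ψ n z‖ ≤ r ^ (n+1) * δ :=
      (Ψnorm n z hz).trans (mul_le_mul_of_nonneg_left hzn (by positivity))
    have hwB : ‖Ψ n z‖ ≤ B * ‖μ‖ ^ (n+1) := hB n z hz
    have hk := hkey n (Ψ n z) hw hwb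
    have he : F n z - F (n+1) z
        = μ ^ (-((n:ℤ)+1)-1) * (μ * Ψ n z - φs (n+1) (Ψ n z)) := by
      have h1 : μ ^ (-((n:ℤ)+1)) = μ ^ (-((n:ℤ)+1)-1) * μ := by
        rw [← zpow_add_one₀ hμne]; ring_nf
      have h2 : μ ^ (-(((n+1:ℕ):ℤ)+1)) = μ ^ (-((n:ℤ)+1)-1) :=
        congrArg (fun t : ℤ => μ ^ t) (by push_cast; ring)
      simp only [hFdef]
      rw [hΨsucc n z, h2, h1]
      ring
    have hnorm : dist (F n z) (F (n+1) z)
        = ‖μ ^ (-((n:ℤ)+1)-1)‖ * ‖φs (n+1) (Ψ n z) - μ * Ψ n z‖ := by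
      rw [dist_eq_norm, he, norm_mul, norm_sub_rev]
    have hnc : ‖μ ^ (-((n:ℤ)+1)-1)‖ = (‖μ‖ ^ (n+2))⁻¹ := by
      rw [norm_zpow, show (-(((n:ℕ):ℤ)+1)-1) = -(((n+2:ℕ):ℤ)) by push_cast; ring,
        zpow_neg, zpow_natCast]
    rw [hnorm, hnc]
    have hstep2 : ‖φs (n+1) (Ψ n z) - μ * Ψ n z‖
        ≤ (a+b) * q ^ (n+1) * (‖μ‖ * (B * ‖μ‖ ^ (n+1))) := by
      refine hk.trans ?_
      have : ‖μ‖ * ‖Ψ n z‖ ≤ ‖μ‖ * (B * ‖μ‖ ^ (n+1)) :=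
        mul_le_mul_of_nonneg_left hwB (norm_nonneg μ)
      exact mul_le_mul_of_nonneg_left this (by positivity)
    calc (‖μ‖ ^ (n+2))⁻¹ * ‖φs (n+1) (Ψ n z) - μ * Ψ n z‖
        ≤ (‖μ‖ ^ (n+2))⁻¹ * ((a+b) * q ^ (n+1) * (‖μ‖ * (B * ‖μ‖ ^ (n+1)))) :=
          mul_le_mul_of_nonneg_left hstep2 (by positivity)
      _ = D * q ^ (n+1) := by
          have hpow : ‖μ‖ ^ (n+2) = ‖μ‖ * ‖μ‖ ^ (n+1) := pow_succ' ‖μ‖ (n+1)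
          calc (‖μ‖ ^ (n+2))⁻¹ * ((a+b) * q ^ (n+1) * (‖μ‖ * (B * ‖μ‖ ^ (n+1))))
              = (a+b) * q ^ (n+1) * B * ((‖μ‖ ^ (n+2))⁻¹ * ‖μ‖ ^ (n+2)) := by
                rw [hpow]; ring
            _ = D * q ^ (n+1) := by
                rw [inv_mul_cancel₀ (by positivity : (‖μ‖:ℝ) ^ (n+2) ≠ 0), hDdef]; ring
      _ ≤ D * q ^ n := by
          have : q ^ (n+1) ≤ q ^ n := pow_le_pow_of_le_one hq0.le hq1.le (Nat.le_succ n)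
          exact mul_le_mul_of_nonneg_left this hD0
  set h : ℂ → ℂ := fun z => limUnder atTop (fun n => F n z) with hhdef
  have htendsto : ∀ z ∈ ball (0:ℂ) δ, Tendsto (fun n => F n z) atTop (nhds (h z)) := by
    intro z hz
    exact (cauchySeq_of_le_geometric q D hq1 (hcau z hz)).tendsto_limUnder
  have hdistb : ∀ z ∈ ball (0:ℂ) δ, ∀ n, dist (F n z) (h z) ≤ D * q ^ n / (1 - q) :=
    fun z hz => dist_le_of_le_geometric_of_tendsto q D hq1 (hcau z hz) (htendsto z hz)
  have hunif : TendstoUniformlyOn F h atTop (ball (0:ℂ) δ) := by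
    rw [Metric.tendstoUniformlyOn_iff]
    intro ε' hε'
    have htt : Tendsto (fun n : ℕ => D * q ^ n / (1 - q)) atTop (nhds 0) := by
      have := (tendsto_pow_atTop_nhds_zero_of_lt_one hq0.le hq1).const_mul D
      simpa using this.div_const (1 - q)
    filter_upwards [htt.eventually (gt_mem_nhds hε')] with n hn z hz
    calc dist (h z) (F n z) = dist (F n z) (h z) := dist_comm _ _
      _ ≤ D * q ^ n / (1 - q) := hdistb z hz n
      _ < ε' := hn
  have hFdiff : ∀ n : ℕ, DifferentiableOn ℂ (F n) (ball (0:ℂ) δ) := fun n =>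
    (Ψdiff n).const_mul _
  have hhdiff : DifferentiableOn ℂ h (ball (0:ℂ) δ) :=
    hunif.tendstoLocallyUniformlyOn.differentiableOn (Eventually.of_forall hFdiff) isOpen_ball
  have hh0 : h 0 = 0 := by
    have h1 : Tendsto (fun n => F n 0) atTop (nhds (h 0)) := htendsto 0 h0S
    have h2 : (fun n => F n 0) = fun _ => (0:ℂ) := by
      funext n; simp [hFdef, Ψzero n]
    rw [h2] at h1
    exact tendsto_nhds_unique h1 tendsto_const_nhds
  -- derivative of h at 0
  have hnb : ball (0:ℂ) δ ∈ nhds (0:ℂ) := isOpen_ball.mem_nhds h0S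
  have Ψderiv : ∀ n : ℕ, deriv (Ψ n) 0 = ∏ k ∈ Finset.range (n+1), deriv (φs k) 0 := by
    intro n
    induction n with
    | zero =>
        have hfun : Ψ 0 = φs 0 := funext hΨ0
        rw [hfun, Finset.prod_range_one]
    | succ n ih =>
        have hfun : Ψ (n+1) = (φs (n+1)) ∘ (Ψ n) := funext (hΨsucc n)
        have hΨat : DifferentiableAt ℂ (Ψ n) 0 := (Ψdiff n).differentiableAt hnb
        have hφat : DifferentiableAt ℂ (φs (n+1)) (Ψ n 0) := by
          rw [Ψzero n]; exact (hφs (n+1)).differentiableAt hnb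
        rw [hfun, deriv_comp 0 hφat hΨat, Ψzero n, ih,
          Finset.prod_range_succ (fun k => deriv (φs k) 0) (n+1)]
        ring
  have hFderiv : ∀ n : ℕ, deriv (F n) 0
      = μ ^ (-((n : ℤ) + 1)) * ∏ k ∈ Finset.range (n+1), deriv (φs k) 0 := by
    intro n
    have hΨat : DifferentiableAt ℂ (Ψ n) 0 := (Ψdiff n).differentiableAt hnb
    have hd : deriv (F n) 0 = μ ^ (-((n : ℤ) + 1)) * deriv (Ψ n) 0 := by
      simp only [hFdef]
      exact deriv_const_mul _ hΨat
    rw [hd, Ψderiv n]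
  have hderivne : deriv h 0 ≠ 0 := by
    have hder : Tendsto (fun n => deriv (F n) 0) atTop (nhds (deriv h 0)) := by
      have := (hunif.tendstoLocallyUniformlyOn.deriv (Eventually.of_forall hFdiff)
        isOpen_ball).tendsto_at h0S
      exact this
    set d : ℕ → ℂ := fun k => deriv (φs k) 0 with hddef
    set P : ℕ → ℂ := fun n => ∏ k ∈ Finset.range (n+1), d k with hPdef
    have hdk : ∀ k, ‖μ‖ * (1 - a * lam ^ k) ≤ ‖d k‖ := by
      intro k
      have h1 := hdcl k
      have h3 : ‖μ‖ - ‖d k‖ ≤ ‖μ - d k‖ := norm_sub_norm_le μ (d k)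
      rw [norm_sub_rev] at h3
      have e1 : C * lam ^ k / δ = ‖μ‖ * (a * lam ^ k) := by
        rw [hadef]; field_simp [habs, hδne]
      rw [e1] at h1
      have e2 : ‖μ‖ * (1 - a * lam ^ k) = ‖μ‖ - ‖μ‖ * (a * lam ^ k) := by ring
      linarith
    obtain ⟨N, hN⟩ : ∃ N, ∀ k ≥ N, a * lam ^ k ≤ 1/2 := by
      have ht : Tendsto (fun k : ℕ => a * lam ^ k) atTop (nhds 0) := by
        simpa using (tendsto_pow_atTop_nhds_zero_of_lt_one hlam0.le hlam1).const_mul a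
      exact eventually_atTop.mp (ht.eventually (eventually_le_nhds (by norm_num)))
    set E2 : ℝ := Real.exp (-(2 * a * (1 - lam)⁻¹)) with hE2def
    have hPn0 : P N ≠ 0 := Finset.prod_ne_zero_iff.mpr (fun k _ => hφs'0 k)
    have hPNpos : 0 < ‖P N‖ := norm_pos_iff.mpr hPn0
    have hE2pos : 0 < E2 := Real.exp_pos _
    have hsuml : ∀ m : ℕ, (∑ k ∈ Finset.range m, lam ^ (N+k+1)) ≤ (1-lam)⁻¹ := by
      intro m
      calc ∑ k ∈ Finset.range m, lam ^ (N+k+1) ≤ ∑ k ∈ Finset.range m, lam ^ k :=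
            Finset.sum_le_sum (fun k _ => pow_le_pow_of_le_one hlam0.le hlam1.le (by omega))
        _ ≤ ∑' k : ℕ, lam ^ k := Summable.sum_le_tsum _ (fun k _ => pow_nonneg hlam0.le k)
              (summable_geometric_of_lt_one hlam0.le hlam1)
        _ = (1-lam)⁻¹ := tsum_geometric_of_lt_one hlam0.le hlam1
    have hlow : ∀ m : ℕ,
        ‖P N‖ * (‖μ‖ ^ m * Real.exp (-(2 * a * ∑ k ∈ Finset.range m, lam ^ (N+k+1))))
          ≤ ‖P (N+m)‖ := by
      intro m
      induction m with
      | zero => simp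
      | succ m ih =>
          have hx0 : 0 ≤ a * lam ^ (N+m+1) := by positivity
          have hx2 : a * lam ^ (N+m+1) ≤ 1/2 := hN (N+m+1) (by omega)
          have hexp := exp_neg_two_le_one_sub hx0 hx2
          have hd1 : ‖μ‖ * Real.exp (-(2 * (a * lam ^ (N+m+1)))) ≤ ‖d (N+m+1)‖ := by
            refine le_trans ?_ (hdk (N+m+1))
            exact mul_le_mul_of_nonneg_left hexp (norm_nonneg μ)
          have hP : P (N+m+1) = P (N+m) * d (N+m+1) := Finset.prod_range_succ d (N+m+1)
          have hsplit : ‖P N‖ * (‖μ‖ ^ (m+1) *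
              Real.exp (-(2 * a * ∑ k ∈ Finset.range (m+1), lam ^ (N+k+1))))
              = (‖P N‖ * (‖μ‖ ^ m *
                  Real.exp (-(2 * a * ∑ k ∈ Finset.range m, lam ^ (N+k+1)))))
                * (‖μ‖ * Real.exp (-(2 * (a * lam ^ (N+m+1))))) := by
            rw [Finset.sum_range_succ,
              show (-(2 * a * ((∑ k ∈ Finset.range m, lam ^ (N+k+1)) + lam ^ (N+m+1))))
                = (-(2 * a * ∑ k ∈ Finset.range m, lam ^ (N+k+1)))
                  + (-(2 * (a * lam ^ (N+m+1)))) from by ring,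
              Real.exp_add]
            ring
          calc ‖P N‖ * (‖μ‖ ^ (m+1) *
              Real.exp (-(2 * a * ∑ k ∈ Finset.range (m+1), lam ^ (N+k+1))))
              = (‖P N‖ * (‖μ‖ ^ m *
                  Real.exp (-(2 * a * ∑ k ∈ Finset.range m, lam ^ (N+k+1)))))
                * (‖μ‖ * Real.exp (-(2 * (a * lam ^ (N+m+1))))) := hsplit
            _ ≤ ‖P (N+m)‖ * ‖d (N+m+1)‖ :=
                mul_le_mul ih hd1 (by positivity) (norm_nonneg _)
            _ = ‖P (N+m) * d (N+m+1)‖ := (norm_mul _ _).symm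
            _ = ‖P (N+m+1)‖ := by rw [← hP]
    have hρ : ∀ n, N ≤ n → ‖P N‖ * E2 / ‖μ‖ ^ (N+1) ≤ ‖deriv (F n) 0‖ := by
      intro n hn
      obtain ⟨m, rfl⟩ : ∃ m, n = N + m := ⟨n - N, by omega⟩
      rw [hFderiv (N+m), norm_mul]
      have hzn : ‖μ ^ (-(((N+m:ℕ):ℤ)+1))‖ = (‖μ‖ ^ (N+m+1))⁻¹ := by
        rw [norm_zpow, show (-((((N+m):ℕ):ℤ)+1)) = -(((N+m+1:ℕ):ℤ)) from by push_cast; ring,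
          zpow_neg, zpow_natCast]
      rw [hzn]
      have hE2le : E2 ≤ Real.exp (-(2 * a * ∑ k ∈ Finset.range m, lam ^ (N+k+1))) := by
        rw [hE2def]
        apply Real.exp_le_exp.mpr
        have h9 := mul_le_mul_of_nonneg_left (hsuml m) (by positivity : (0:ℝ) ≤ 2 * a)
        linarith
      have h7 : ‖P N‖ * (‖μ‖ ^ m * E2) ≤ ‖P (N+m)‖ := by
        refine le_trans ?_ (hlow m)
        have := mul_le_mul_of_nonneg_left hE2le (by positivity : (0:ℝ) ≤ ‖μ‖ ^ m)
        exact mul_le_mul_of_nonneg_left this hPNpos.le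
      have hpow : ‖μ‖ ^ (N+m+1) = ‖μ‖ ^ m * ‖μ‖ ^ (N+1) := by
        rw [← pow_add]; congr 1; omega
      calc ‖P N‖ * E2 / ‖μ‖ ^ (N+1)
          = (‖μ‖ ^ (N+m+1))⁻¹ * (‖P N‖ * (‖μ‖ ^ m * E2)) := by
            rw [hpow]; field_simp [hμ0.ne']
        _ ≤ (‖μ‖ ^ (N+m+1))⁻¹ * ‖P (N+m)‖ :=
            mul_le_mul_of_nonneg_left h7 (by positivity)
    have hlim : Tendsto (fun n => ‖deriv (F n) 0‖) atTop (nhds ‖deriv h 0‖) := hder.norm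
    have hfin : ‖P N‖ * E2 / ‖μ‖ ^ (N+1) ≤ ‖deriv h 0‖ :=
      ge_of_tendsto hlim (eventually_atTop.mpr ⟨N, hρ⟩)
    intro hc
    rw [hc, norm_zero] at hfin
    have : 0 < ‖P N‖ * E2 / ‖μ‖ ^ (N+1) := by positivity
    linarith
  have hinjh : Set.InjOn h (ball (0:ℂ) δ) := by
    intro x hx y hy hxy
    by_contra hne
    set g : ℂ → ℂ := fun z => h z - h x with hgdef
    have hgan : AnalyticOnNhd ℂ g (ball (0:ℂ) δ) :=
      (hhdiff.sub (differentiableOn_const _)).analyticOnNhd isOpen_ball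
    rcases (hgan y hy).eventually_eq_zero_or_eventually_ne_zero with hzero | hne'
    · have hEqOn : EqOn g 0 (ball (0:ℂ) δ) :=
        hgan.eqOn_zero_of_preconnected_of_eventuallyEq_zero
          (convex_ball (0:ℂ) δ).isPreconnected hy hzero
      have hEq : h =ᶠ[nhds (0:ℂ)] fun _ => h x := by
        filter_upwards [hnb] with z hz
        have := hEqOn hz
        simpa [hgdef, sub_eq_zero] using this
      exact hderivne (by rw [hEq.deriv_eq]; simp)
    · have hxyd : 0 < dist x y := dist_pos.mpr hne
      obtain ⟨r₀, hr₀, hball₀⟩ := Metric.eventually_nhds_iff.mp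
        (eventually_nhdsWithin_iff.mp hne')
      obtain ⟨r₁, hr₁, hball₁⟩ := Metric.isOpen_iff.mp isOpen_ball y hy
      set ρ : ℝ := min (min r₀ r₁) (dist x y) / 2 with hρdef
      have hmin0 : 0 < min (min r₀ r₁) (dist x y) := lt_min (lt_min hr₀ hr₁) hxyd
      have hρ0 : 0 < ρ := by positivity
      have hρr₀ : ρ < r₀ :=
        lt_of_lt_of_le (half_lt_self hmin0) ((min_le_left _ _).trans (min_le_left _ _))
      have hρr₁ : ρ < r₁ :=
        lt_of_lt_of_le (half_lt_self hmin0) ((min_le_left _ _).trans (min_le_right _ _))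
      have hρd : ρ < dist x y :=
        lt_of_lt_of_le (half_lt_self hmin0) (min_le_right _ _)
      have hsub : closedBall y ρ ⊆ ball (0:ℂ) δ :=
        (closedBall_subset_ball hρr₁).trans hball₁
      have hnz : ∀ z ∈ closedBall y ρ, z ≠ y → g z ≠ 0 := by
        intro z hz hzy
        refine hball₀ (lt_of_le_of_lt (mem_closedBall.mp hz) hρr₀) ?_
        simpa using hzy
      have hsphne : (sphere y ρ).Nonempty := NormedSpace.sphere_nonempty.mpr hρ0.le
      have hgc : ContinuousOn (fun z => ‖g z‖) (sphere y ρ) := by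
        refine ContinuousOn.norm ?_
        refine ((hhdiff.continuousOn.sub continuousOn_const).mono ?_)
        exact sphere_subset_closedBall.trans hsub
      obtain ⟨w₀, hw₀s, hw₀min⟩ := (isCompact_sphere y ρ).exists_isMinOn hsphne hgc
      set m : ℝ := ‖g w₀‖ with hmdef
      have hw₀y : w₀ ≠ y := by
        intro e
        have : dist w₀ y = ρ := mem_sphere.mp hw₀s
        rw [e, dist_self] at this
        exact hρ0.ne this
      have hm0 : 0 < m :=
        norm_pos_iff.mpr (hnz w₀ (sphere_subset_closedBall hw₀s) hw₀y)
      obtain ⟨n, hn⟩ := (Metric.tendstoUniformlyOn_iff.mp hunif (m/4) (by positivity)).exists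
      set gn : ℂ → ℂ := fun z => F n z - F n x with hgndef
      have hclose2 : ∀ z ∈ ball (0:ℂ) δ, ‖gn z - g z‖ < m/2 := by
        intro z hz
        have h1 := hn z hz
        have h2 := hn x hx
        rw [dist_comm, dist_eq_norm] at h1 h2
        calc ‖gn z - g z‖ = ‖(F n z - h z) - (F n x - h x)‖ := by
              rw [hgndef, hgdef]; congr 1; ring
          _ ≤ ‖F n z - h z‖ + ‖F n x - h x‖ := norm_sub_le _ _
          _ < m/4 + m/4 := add_lt_add h1 h2
          _ = m/2 := by ring
      have hFinj : Set.InjOn (F n) (ball (0:ℂ) δ) := by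
        intro u hu v hv huv
        have hc0 : (μ : ℂ) ^ (-((n:ℤ)+1)) ≠ 0 := zpow_ne_zero _ hμne
        simp only [hFdef] at huv
        exact Ψinj n hu hv (mul_left_cancel₀ hc0 huv)
      have hgnnz : ∀ z ∈ closedBall y ρ, gn z ≠ 0 := by
        intro z hz
        have hz' : z ∈ ball (0:ℂ) δ := hsub hz
        have hzx : z ≠ x := by
          intro e
          rw [e] at hz
          exact absurd (mem_closedBall.mp hz) (not_le.mpr hρd)
        exact sub_ne_zero.mpr (fun e => hzx (hFinj hz' hx e))
      have hFdiffOn : DifferentiableOn ℂ (fun z => (gn z)⁻¹) (closedBall y ρ) := by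
        refine DifferentiableOn.inv ?_ hgnnz
        exact ((hFdiff n).sub (differentiableOn_const _)).mono hsub
      have hdc : DiffContOnCl ℂ (fun z => (gn z)⁻¹) (ball y ρ) := by
        apply DifferentiableOn.diffContOnCl
        rwa [closure_ball y hρ0.ne']
      have hbound : ∀ z ∈ frontier (ball y ρ), ‖(gn z)⁻¹‖ ≤ 2/m := by
        intro z hz
        rw [frontier_ball y hρ0.ne'] at hz
        have hzball : z ∈ ball (0:ℂ) δ := hsub (sphere_subset_closedBall hz)
        have h1 : m ≤ ‖g z‖ := isMinOn_iff.mp hw₀min z hz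
        have h2 := hclose2 z hzball
        have h4 : ‖g z‖ - ‖gn z‖ ≤ ‖gn z - g z‖ := by
          have h4' := norm_sub_norm_le (g z) (gn z)
          rwa [norm_sub_rev (g z) (gn z)] at h4'
        have h3 : m/2 ≤ ‖gn z‖ := by linarith
        rw [norm_inv]
        have h5 : (m/2)⁻¹ = 2/m := by
          rw [inv_div]
        calc ‖gn z‖⁻¹ ≤ (m/2)⁻¹ := inv_anti₀ (by linarith) h3
          _ = 2/m := h5
      have hyb : ‖(gn y)⁻¹‖ ≤ 2/m := by
        refine Complex.norm_le_of_forall_mem_frontier_norm_le isBounded_ball hdc hbound ?_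
        rw [closure_ball y hρ0.ne']
        exact mem_closedBall_self hρ0.le
      have hgy0 : 0 < ‖gn y‖ := norm_pos_iff.mpr (hgnnz y (mem_closedBall_self hρ0.le))
      have h5 : m/2 ≤ ‖gn y‖ := by
        rw [norm_inv] at hyb
        have h6 := mul_le_mul_of_nonneg_right hyb hgy0.le
        rw [inv_mul_cancel₀ hgy0.ne'] at h6
        rw [div_mul_eq_mul_div, le_div_iff₀ hm0] at h6
        nlinarith
      have h7 : ‖gn y‖ < m/2 := by
        have h2 := hclose2 y (hsub (mem_closedBall_self hρ0.le))
        have hgy : g y = 0 := by rw [hgdef]; simp [hxy]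
        calc ‖gn y‖ = ‖gn y - g y‖ := by rw [hgy, sub_zero]
          _ < m/2 := h2
      linarith
  exact ⟨h, hunif, hhdiff, hh0, hderivne, hinjh⟩
end

section
/- Let M be a 2×2 integer matrix with determinant 1 and all entries positive, and suppose t > 1 and p, q, u, v > 0 are real numbers with M·(p, q)ᵀ = t·(p, q)ᵀ and M·(−u, v)ᵀ = t⁻¹·(−u, v)ᵀ. Then there exists a constant c > 0 such that for all integers a, b not both zero, |b·v − a·u| · |a·p + b·q| ≥ c. Consequently, for every n ∈ ℤ and all natural numbers a, b not both zero, |t^{−n}·(b·v − a·u)| ≥ c / (tⁿ·(a·p + b·q)). -/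
/-!
Write `M = [[A, B], [C, D]]`. The eigen-equations give the identity
`B · (b v - a u)(a p + b q) = p u · Q(a, b)` for the integral binary form
`Q(a, b) = -B a² + (A - D) a b + C b²`, whose discriminant is `(A + D)² - 4`.
Since `A + D = t + t⁻¹ > 2`, this discriminant lies strictly between `(A + D - 1)²` and
`(A + D)²`, so it is not a square and `Q` has no nontrivial integral zero. Hence
`|Q(a, b)| ≥ 1` and `c = p u / B` works.
-/

theorem Int.not_isSquare_sq_sub_four {s : ℤ} (hs : 3 ≤ s) : ¬IsSquare (s ^ 2 - 4) := by
  rintro ⟨r, hr⟩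
  rw [← abs_mul_abs_self] at hr
  have hr0 := abs_nonneg r
  rcases le_or_gt s |r| with h | h
  · nlinarith
  · have : |r| ≤ s - 1 := by omega
    nlinarith

theorem Int.eq_zero_and_eq_zero_of_binaryForm_eq_zero {α β γ a b : ℤ}
    (hdisc : ¬IsSquare (β ^ 2 - 4 * α * γ)) (h : α * a ^ 2 + β * a * b + γ * b ^ 2 = 0) :
    a = 0 ∧ b = 0 := by
  have hsq : (2 * α * a + β * b) ^ 2 = (β ^ 2 - 4 * α * γ) * b ^ 2 := by
    linear_combination 4 * α * h
  obtain rfl | hb := eq_or_ne b 0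
  · have hα : α ≠ 0 := by
      rintro rfl
      exact hdisc ⟨β, by ring⟩
    simpa [hα] using h
  · obtain ⟨k, hk⟩ : b ∣ 2 * α * a + β * b :=
      (Int.pow_dvd_pow_iff two_ne_zero).mp ⟨_, hsq.trans (mul_comm _ _)⟩
    refine absurd ⟨k, mul_left_cancel₀ (pow_ne_zero 2 hb) ?_⟩ hdisc
    linear_combination -hsq + (2 * α * a + β * b + b * k) * hk

theorem Matrix.mulVec_fin_two_eq_smul_iff {R : Type*} [CommSemiring R]
    (M : Matrix (Fin 2) (Fin 2) R) (x y s : R) :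
    M.mulVec ![x, y] = s • ![x, y] ↔
      M 0 0 * x + M 0 1 * y = s * x ∧ M 1 0 * x + M 1 1 * y = s * y := by
  simp [funext_iff, Fin.forall_fin_two]

section Eigen

variable {K : Type*} [Field K] {A B C D t p q u v : K}

theorem add_inv_eq_add_of_eigen (hdet : A * D - B * C = 1) (hp : p ≠ 0)
    (h₁ : A * p + B * q = t * p) (h₂ : C * p + D * q = t * q) :
    t + t⁻¹ = A + D := by
  have hchar : p * (t ^ 2 - (A + D) * t + 1) = 0 := by
    linear_combination -(t - D) * h₁ - B * h₂ - p * hdet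
  have hchar' := (mul_eq_zero.mp hchar).resolve_left hp
  have ht : t ≠ 0 := by rintro rfl; simp at hchar'
  field_simp
  linear_combination hchar'

theorem mul_eigen_product_eq (htr : t + t⁻¹ = A + D) (h₁ : A * p + B * q = t * p)
    (h₃ : A * -u + B * v = t⁻¹ * -u) (h₄ : C * -u + D * v = t⁻¹ * v) (a b : K) :
    B * ((b * v - a * u) * (a * p + b * q)) =
      p * u * (-B * a ^ 2 + (A - D) * a * b + C * b ^ 2) := by
  linear_combination (a * b * p) * h₃ - (a * b * u) * h₁ - (a * b * p * u) * htr +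
    (b ^ 2 * v) * h₁ + (b ^ 2 * p) * h₄ + (b ^ 2 * p * v) * htr

end Eigen

theorem two_lt_add_inv_of_one_lt {K : Type*} [Field K] [LinearOrder K] [IsStrictOrderedRing K]
    {t : K} (ht : 1 < t) : 2 < t + t⁻¹ := by
  have h0 : 0 < t := by linarith
  have hsq : t + t⁻¹ - 2 = (t - 1) ^ 2 / t := by field_simp; ring
  have : 0 < (t - 1) ^ 2 / t := by positivity
  linarith

theorem div_le_abs_mul_abs_of_eigen {A B C D : ℤ} {t p q u v : ℝ}
    (hdet : A * D - B * C = 1) (hB : 0 < B) (ht : 1 < t) (hp : 0 < p) (hu : 0 < u)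
    (h₁ : A * p + B * q = t * p) (h₂ : C * p + D * q = t * q)
    (h₃ : A * -u + B * v = t⁻¹ * -u) (h₄ : C * -u + D * v = t⁻¹ * v)
    (a b : ℤ) (hab : ¬(a = 0 ∧ b = 0)) :
    p * u / B ≤ |(b : ℝ) * v - a * u| * |(a : ℝ) * p + b * q| := by
  have htr := add_inv_eq_add_of_eigen (by exact_mod_cast hdet) hp.ne' h₁ h₂
  have htrace : 3 ≤ A + D := by
    have : (2 : ℤ) < A + D := by exact_mod_cast htr ▸ two_lt_add_inv_of_one_lt ht
    omega
  have hQ : -B * a ^ 2 + (A - D) * a * b + C * b ^ 2 ≠ 0 := fun h =>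
    hab <| Int.eq_zero_and_eq_zero_of_binaryForm_eq_zero
      (by convert Int.not_isSquare_sq_sub_four htrace using 2; linear_combination -4 * hdet) h
  have hQ1 : (1 : ℝ) ≤ |-(B : ℝ) * a ^ 2 + (A - D) * a * b + C * b ^ 2| := by
    exact_mod_cast Int.one_le_abs hQ
  have hBR : (0 : ℝ) < B := by exact_mod_cast hB
  calc p * u / B
      ≤ p * u / B * |-(B : ℝ) * a ^ 2 + (A - D) * a * b + C * b ^ 2| :=
        le_mul_of_one_le_right (by positivity) hQ1
    _ = |B * ((b * v - a * u) * (a * p + b * q))| / B := by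
        rw [mul_eigen_product_eq htr h₁ h₃ h₄, abs_mul, abs_of_pos (by positivity : 0 < p * u)]
        ring
    _ = |(b : ℝ) * v - a * u| * |(a : ℝ) * p + b * q| := by
        rw [abs_mul, abs_of_pos hBR, abs_mul, mul_div_cancel_left₀ _ hBR.ne']

theorem div_zpow_mul_le_abs_zpow_neg_mul {K : Type*} [Field K] [LinearOrder K]
    [IsStrictOrderedRing K] {t c x y : K} (ht : 0 < t) (hy : 0 < y) (h : c ≤ |x| * |y|)
    (n : ℤ) : c / (t ^ n * y) ≤ |t ^ (-n) * x| := by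
  have htn : 0 < t ^ n := zpow_pos ht n
  rw [abs_of_pos hy] at h
  rw [zpow_neg, abs_mul, abs_inv, abs_of_pos htn, div_le_iff₀ (by positivity)]
  calc c ≤ |x| * y := h
    _ = (t ^ n)⁻¹ * |x| * (t ^ n * y) := by field_simp

theorem natCast_mul_add_natCast_mul_pos {R : Type*} [Semiring R] [PartialOrder R]
    [IsStrictOrderedRing R] {p q : R} (hp : 0 < p) (hq : 0 < q) {a b : ℕ}
    (hab : ¬(a = 0 ∧ b = 0)) : 0 < a * p + b * q := by
  rcases Nat.eq_zero_or_pos a with rfl | ha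
  · have hb : 0 < b := Nat.pos_of_ne_zero (by tauto)
    simpa using mul_pos (Nat.cast_pos.2 hb) hq
  · exact add_pos_of_pos_of_nonneg (mul_pos (Nat.cast_pos.2 ha) hp) (by positivity)

theorem proper_discontinuity_of_cascade_general
    (M : Matrix (Fin 2) (Fin 2) ℤ) (hdet : M.det = 1) (hpos : ∀ i j, 0 < M i j)
    (t p q u v : ℝ) (ht : 1 < t)
    (hp : 0 < p) (hq : 0 < q) (hu : 0 < u)
    (heig₁ : (M.map (Int.cast : ℤ → ℝ)).mulVec ![p, q] = t • ![p, q])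
    (heig₂ : (M.map (Int.cast : ℤ → ℝ)).mulVec ![-u, v] = t⁻¹ • ![-u, v]) :
    ∃ c : ℝ, 0 < c ∧
      (∀ a b : ℤ, ¬(a = 0 ∧ b = 0) →
        c ≤ |(b : ℝ) * v - (a : ℝ) * u| * |(a : ℝ) * p + (b : ℝ) * q|) ∧
      (∀ n : ℤ, ∀ a b : ℕ, ¬(a = 0 ∧ b = 0) →
        c / (t ^ n * ((a : ℝ) * p + (b : ℝ) * q)) ≤
          |t ^ (-n) * ((b : ℝ) * v - (a : ℝ) * u)|) := by
  obtain ⟨h₁, h₂⟩ := (Matrix.mulVec_fin_two_eq_smul_iff _ _ _ _).1 heig₁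
  obtain ⟨h₃, h₄⟩ := (Matrix.mulVec_fin_two_eq_smul_iff _ _ _ _).1 heig₂
  simp only [Matrix.map_apply] at h₁ h₂ h₃ h₄
  have hbound := div_le_abs_mul_abs_of_eigen (Matrix.det_fin_two M ▸ hdet) (hpos 0 1) ht hp hu
    h₁ h₂ h₃ h₄
  have hB : (0 : ℝ) < M 0 1 := by exact_mod_cast hpos 0 1
  refine ⟨p * u / M 0 1, by positivity, hbound, fun n a b hab => ?_⟩
  refine div_zpow_mul_le_abs_zpow_neg_mul (by linarith)
    (natCast_mul_add_natCast_mul_pos hp hq hab) ?_ n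
  exact_mod_cast hbound a b (by exact_mod_cast hab)

/-- Proper discontinuity of the cascade of translations: if the integer matrix `M` has
determinant `1`, positive entries, eigenvalue `t > 1` with positive eigenvector `(p, q)`
and eigenvalue `t⁻¹` with eigenvector `(−u, v)`, then the product
`|b·v − a·u| · |a·p + b·q|` is uniformly bounded below over nonzero integer vectors
`(a, b)`; consequently `|t^{−n}(b·v − a·u)| ≥ c / (tⁿ(a·p + b·q))`. -/
theorem proper_discontinuity_of_cascade
    (M : Matrix (Fin 2) (Fin 2) ℤ) (hdet : M.det = 1) (hpos : ∀ i j, 0 < M i j)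
    (t p q u v : ℝ) (ht : 1 < t)
    (hp : 0 < p) (hq : 0 < q) (hu : 0 < u) (hv : 0 < v)
    (heig₁ : (M.map (Int.cast : ℤ → ℝ)).mulVec ![p, q] = t • ![p, q])
    (heig₂ : (M.map (Int.cast : ℤ → ℝ)).mulVec ![-u, v] = t⁻¹ • ![-u, v]) :
    ∃ c : ℝ, 0 < c ∧
      (∀ a b : ℤ, ¬(a = 0 ∧ b = 0) →
        c ≤ |(b : ℝ) * v - (a : ℝ) * u| * |(a : ℝ) * p + (b : ℝ) * q|) ∧
      (∀ n : ℤ, ∀ a b : ℕ, ¬(a = 0 ∧ b = 0) →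
        c / (t ^ n * ((a : ℝ) * p + (b : ℝ) * q)) ≤
          |t ^ (-n) * ((b : ℝ) * v - (a : ℝ) * u)|) :=
  proper_discontinuity_of_cascade_general M hdet hpos t p q u v ht hp hq hu heig₁ heig₂
end
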